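/- arXiv:1905.00748 — 7 statements merged into one kernel-verified Lean document; each statement's English description precedes it below -/
import Mathlib

section
/- Let q, x ∈ ℂ with |q| < 1 and |x| < 1. Then E_q(x) ≠ 0, the series ∑_{n≥0} x^n / ((1−q)(1−q²)⋯(1−qⁿ)) converges absolutely (with the empty product for n = 0 equal to 1), and E_q(x)^{-1} = ∑_{n≥0} x^n / ((1−q)(1−q²)⋯(1−qⁿ)). -/
/-!
Write `e_q(y) = ∑ yⁿ / (q; q)_n`. Comparing coefficients gives the functional equation
`e_q(q y) = (1 - y) e_q(y)`, and iterating it, `e_q(qⁿ x) = (x; q)_n e_q(x)`. As `n → ∞` the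
left side tends to `e_q(0) = 1` by dominated convergence, while `(x; q)_n → E_q(x)`.
Hence `E_q(x) e_q(x) = 1`, which gives both the nonvanishing and the inversion formula.
-/

open Finset Filter Topology

section

variable {𝕜 : Type*} [NormedField 𝕜] {q : 𝕜}

/-- The q-Pochhammer symbol `(q; q)_n`. -/
def qPochhammer (q : 𝕜) (n : ℕ) : 𝕜 := ∏ i ∈ range n, (1 - q ^ (i + 1))

noncomputable def qExp (q y : 𝕜) : 𝕜 := ∑' n, y ^ n / qPochhammer q n

lemma one_sub_ne_zero_of_norm_lt_one {z : 𝕜} (hz : ‖z‖ < 1) : 1 - z ≠ 0 :=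
  sub_ne_zero.2 fun h => by simp [← h] at hz

lemma qPochhammer_succ (q : 𝕜) (n : ℕ) :
    qPochhammer q (n + 1) = qPochhammer q n * (1 - q ^ (n + 1)) :=
  prod_range_succ _ _

lemma one_sub_pow_succ_ne_zero (hq : ‖q‖ < 1) (n : ℕ) : 1 - q ^ (n + 1) ≠ 0 :=
  one_sub_ne_zero_of_norm_lt_one <| by
    rw [norm_pow]; exact pow_lt_one₀ (norm_nonneg q) hq (Nat.succ_ne_zero n)

lemma qPochhammer_ne_zero (hq : ‖q‖ < 1) (n : ℕ) : qPochhammer q n ≠ 0 :=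
  prod_ne_zero_iff.2 fun i _ => one_sub_pow_succ_ne_zero hq i

lemma summable_norm_qExp_term (hq : ‖q‖ < 1) {y : 𝕜} (hy : ‖y‖ < 1) :
    Summable fun n => ‖y ^ n / qPochhammer q n‖ := by
  obtain ⟨r, hyr, hr1⟩ := exists_between hy
  have hratio : Tendsto (fun n : ℕ => ‖y‖ / ‖1 - q ^ (n + 1)‖) atTop (𝓝 ‖y‖) := by
    have hpow : Tendsto (fun n : ℕ => q ^ (n + 1)) atTop (𝓝 0) :=
      (tendsto_pow_atTop_nhds_zero_of_norm_lt_one hq).comp (tendsto_add_atTop_nat 1)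
    simpa [Pi.div_def] using tendsto_const_nhds.div (hpow.const_sub 1).norm (by simp)
  refine summable_of_ratio_norm_eventually_le hr1 ?_
  filter_upwards [hratio.eventually (gt_mem_nhds hyr)] with n hn
  rw [norm_norm, norm_norm, qPochhammer_succ, pow_succ, mul_div_mul_comm, norm_mul, mul_comm,
    norm_div]
  exact mul_le_mul_of_nonneg_right hn.le (norm_nonneg _)

variable [CompleteSpace 𝕜]

lemma summable_qExp_term (hq : ‖q‖ < 1) {y : 𝕜} (hy : ‖y‖ < 1) :
    Summable fun n => y ^ n / qPochhammer q n :=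
  (summable_norm_qExp_term hq hy).of_norm

lemma qExp_mul_left (hq : ‖q‖ < 1) {y : 𝕜} (hy : ‖y‖ < 1) :
    qExp q (q * y) = (1 - y) * qExp q y := by
  have hqy : ‖q * y‖ < 1 := by
    rw [norm_mul]; exact mul_lt_one_of_nonneg_of_lt_one_left (norm_nonneg q) hq hy.le
  have hy' := summable_qExp_term hq hy
  have hqy' := summable_qExp_term hq hqy
  have hstep (n : ℕ) : y ^ (n + 1) / qPochhammer q (n + 1) - (q * y) ^ (n + 1) /
      qPochhammer q (n + 1) = y * (y ^ n / qPochhammer q n) := by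
    rw [qPochhammer_succ]
    field_simp [qPochhammer_ne_zero hq n, one_sub_pow_succ_ne_zero hq n]
    ring
  have hdiff : qExp q y - qExp q (q * y) = y * qExp q y := by
    rw [qExp, qExp, ← hy'.tsum_sub hqy', (hy'.sub hqy').tsum_eq_zero_add]
    simp only [hstep, tsum_mul_left]
    simp
  linear_combination -hdiff

lemma qExp_pow_mul (hq : ‖q‖ < 1) {x : 𝕜} (hx : ‖x‖ < 1) (n : ℕ) :
    qExp q (q ^ n * x) = (∏ k ∈ range n, (1 - q ^ k * x)) * qExp q x := by
  induction n with
  | zero => simp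
  | succ n ih =>
    have hnx : ‖q ^ n * x‖ < 1 := by
      rw [norm_mul, norm_pow]
      exact mul_lt_one_of_nonneg_of_lt_one_right (pow_le_one₀ (norm_nonneg q) hq.le)
        (norm_nonneg x) hx
    rw [pow_succ', mul_assoc, qExp_mul_left hq hnx, ih, prod_range_succ]
    ring

lemma tendsto_qExp_pow_mul (hq : ‖q‖ < 1) {x : 𝕜} (hx : ‖x‖ < 1) :
    Tendsto (fun n => qExp q (q ^ n * x)) atTop (𝓝 1) := by
  have hlim : ∑' m, (0 : 𝕜) ^ m / qPochhammer q m = 1 := by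
    rw [tsum_eq_single 0 fun m hm => by simp [hm]]
    simp [qPochhammer]
  rw [← hlim]
  refine tendsto_tsum_of_dominated_convergence (summable_norm_qExp_term hq hx) (fun m => ?_) ?_
  · have := (tendsto_pow_atTop_nhds_zero_of_norm_lt_one hq).mul_const x
    simpa using (this.pow m).div_const (qPochhammer q m)
  · refine Eventually.of_forall fun n m => ?_
    rw [norm_div, norm_div, mul_pow, norm_mul]
    gcongr
    exact mul_le_of_le_one_left (norm_nonneg _) (by simp [pow_le_one₀, hq.le])

lemma multipliable_one_sub_pow_mul (hq : ‖q‖ < 1) (x : 𝕜) :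
    Multipliable fun k : ℕ => 1 - q ^ k * x := by
  simp only [sub_eq_add_neg]
  refine multipliable_one_add_of_summable ?_
  simpa [norm_mul, norm_pow] using
    (summable_geometric_of_lt_one (norm_nonneg q) hq).mul_right ‖x‖

lemma tprod_one_sub_pow_mul_mul_qExp (hq : ‖q‖ < 1) {x : 𝕜} (hx : ‖x‖ < 1) :
    (∏' k : ℕ, (1 - q ^ k * x)) * qExp q x = 1 := by
  have hpartial := ((multipliable_one_sub_pow_mul hq x).hasProd.tendsto_prod_nat).mul_const
    (qExp q x)
  simp only [← qExp_pow_mul hq hx] at hpartial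
  exact tendsto_nhds_unique hpartial (tendsto_qExp_pow_mul hq hx)

end

open Finset in
/-- Let `q, x ∈ ℂ` with `|q| < 1` and `|x| < 1`.  Then
`E_q(x) = ∏_{k≥0}(1 − qᵏ x)` is nonzero, the series
`∑_{n≥0} xⁿ / ((1−q)(1−q²)⋯(1−qⁿ))` converges absolutely (the empty product for
`n = 0` being `1`), and `E_q(x)⁻¹` equals this sum. -/
theorem quantum_dilog_inverse_series (q x : ℂ) (hq : ‖q‖ < 1) (hx : ‖x‖ < 1) :
    (∏' k : ℕ, (1 - q ^ k * x)) ≠ 0 ∧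
      (Summable fun n : ℕ => ‖x ^ n / ∏ i ∈ Finset.range n, (1 - q ^ (i + 1))‖) ∧
      (∏' k : ℕ, (1 - q ^ k * x))⁻¹ =
        ∑' n : ℕ, x ^ n / ∏ i ∈ Finset.range n, (1 - q ^ (i + 1)) := by
  have h := tprod_one_sub_pow_mul_mul_qExp hq hx
  exact ⟨left_ne_zero_of_mul_eq_one h, summable_norm_qExp_term hq hx,
    inv_eq_of_mul_eq_one_right h⟩
end

section
/- Let η ∈ ℂ and w ∈ ℂ with Im(w) > 0 and such that w + η is not an integer. Then Λ(w,η) · Λ(−w, 1−η) = (1 − exp(2πi(w+η)))^{-1}. Similarly, if Im(w) < 0 and w + η is not an integer, then Λ(w,η) · Λ(−w, 1−η) = (1 − exp(−2πi(w+η)))^{-1}. -/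
/-- The modified gamma function (with `ω = 1`):
`Λ(w,η) = Γ(w+η) · exp(w) / (√(2π) · exp((η + w − 1/2)·Log w))`,
where `Log` is the principal branch of the logarithm. -/
noncomputable def Lambda (w η : ℂ) : ℂ :=
  Complex.Gamma (w + η) * Complex.exp w /
    ((Real.sqrt (2 * Real.pi) : ℂ) * Complex.exp ((η + w - 1 / 2) * Complex.log w))

open Complex in
/-- Reflection property of the modified gamma function.  Let `η ∈ ℂ` and
`w ∈ ℂ` with `w + η` not an integer.  If `Im(w) > 0` then
`Λ(w,η) · Λ(−w, 1−η) = (1 − exp(2πi(w+η)))⁻¹`, and if `Im(w) < 0` then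
`Λ(w,η) · Λ(−w, 1−η) = (1 − exp(−2πi(w+η)))⁻¹`. -/
theorem lambda_reflection (η w : ℂ) (hint : ∀ n : ℤ, w + η ≠ (n : ℂ)) :
    (0 < w.im →
      Lambda w η * Lambda (-w) (1 - η) =
        (1 - Complex.exp (2 * Real.pi * Complex.I * (w + η)))⁻¹) ∧
    (w.im < 0 →
      Lambda w η * Lambda (-w) (1 - η) =
        (1 - Complex.exp (-(2 * Real.pi * Complex.I * (w + η))))⁻¹) := by
  have hπ : ((Real.pi : ℂ)) ≠ 0 := by exact_mod_cast Real.pi_ne_zero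
  set z : ℂ := w + η with hz
  have hz' : -w + (1 - η) = 1 - z := by rw [hz]; ring
  have hsin : Complex.sin ((Real.pi : ℂ) * z) ≠ 0 := by
    rw [Complex.sin_ne_zero_iff]
    intro k hk
    exact hint k (mul_left_cancel₀ hπ (by rw [hk]; ring))
  have hs : ((Real.sqrt (2 * Real.pi) : ℂ)) * ((Real.sqrt (2 * Real.pi) : ℂ))
      = 2 * (Real.pi : ℂ) := by
    rw [← Complex.ofReal_mul, Real.mul_self_sqrt (by positivity)]
    push_cast; ring
  set E : ℂ := Complex.exp ((Real.pi : ℂ) * I * z) with hE_def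
  have hE : E ≠ 0 := Complex.exp_ne_zero _
  have hI2 : Complex.exp ((Real.pi : ℂ) * I / 2) = I := by
    rw [show ((Real.pi : ℂ) * I / 2) = ((Real.pi : ℂ) / 2) * I by ring,
      Complex.exp_mul_I, Complex.cos_pi_div_two, Complex.sin_pi_div_two]
    ring
  have hsin_formula : Complex.sin ((Real.pi : ℂ) * z) = (E⁻¹ - E) * I / 2 := by
    simp only [Complex.sin]
    rw [show (-((Real.pi : ℂ) * z) * I) = -((Real.pi : ℂ) * I * z) by ring,
      show ((Real.pi : ℂ) * z) * I = (Real.pi : ℂ) * I * z by ring, Complex.exp_neg]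
  have hd : E⁻¹ - E ≠ 0 := by
    intro h
    apply hsin
    rw [hsin_formula, h]
    ring
  have hmain : Lambda w η * Lambda (-w) (1 - η) =
      (Real.pi : ℂ) / Complex.sin ((Real.pi : ℂ) * z) /
        ((2 * (Real.pi : ℂ)) * (Complex.exp ((η + w - 1 / 2) * Complex.log w) *
          Complex.exp ((1 - η + -w - 1 / 2) * Complex.log (-w)))) := by
    simp only [Lambda]
    rw [div_mul_div_comm, hz', mul_mul_mul_comm, Complex.Gamma_mul_Gamma_one_sub,
      ← Complex.exp_add, add_neg_cancel, Complex.exp_zero, mul_one,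
      mul_mul_mul_comm, hs]
  constructor
  · intro him
    have hlog : Complex.log (-w) = Complex.log w - (Real.pi : ℂ) * I := by
      refine Complex.ext ?_ ?_
      · simp [Complex.log_re]
      · simp [Complex.log_im, Complex.arg_neg_eq_arg_sub_pi_of_im_pos him]
    have hexp : Complex.exp ((η + w - 1 / 2) * Complex.log w) *
        Complex.exp ((1 - η + -w - 1 / 2) * Complex.log (-w)) = E * I⁻¹ := by
      rw [hlog, ← Complex.exp_add,
        show (η + w - 1 / 2) * Complex.log w +
            (1 - η + -w - 1 / 2) * (Complex.log w - (Real.pi : ℂ) * I)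
          = (Real.pi : ℂ) * I * z - (Real.pi : ℂ) * I / 2 by rw [hz]; ring,
        Complex.exp_sub, hI2, div_eq_mul_inv]
    have hEE : Complex.exp (2 * (Real.pi : ℂ) * I * (w + η)) = E * E := by
      rw [← Complex.exp_add]; congr 1; rw [hz]; ring
    have h1 : (1 : ℂ) - E * E ≠ 0 := by
      rw [show (1 : ℂ) - E * E = (E⁻¹ - E) * E by rw [sub_mul, inv_mul_cancel₀ hE]]
      exact mul_ne_zero hd hE
    rw [hmain, hexp, hEE, hsin_formula, div_div,
      show ((E⁻¹ - E) * I / 2) * (2 * (Real.pi : ℂ) * (E * I⁻¹))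
          = (Real.pi : ℂ) * (E⁻¹ * E - E * E) * (I * I⁻¹) by ring,
      inv_mul_cancel₀ hE, mul_inv_cancel₀ Complex.I_ne_zero, mul_one,
      div_eq_mul_inv, mul_inv, ← mul_assoc, mul_inv_cancel₀ hπ, one_mul]
  · intro him
    have hlog : Complex.log (-w) = Complex.log w + (Real.pi : ℂ) * I := by
      refine Complex.ext ?_ ?_
      · simp [Complex.log_re]
      · simp [Complex.log_im, Complex.arg_neg_eq_arg_add_pi_of_im_neg him]
    have hexp : Complex.exp ((η + w - 1 / 2) * Complex.log w) *
        Complex.exp ((1 - η + -w - 1 / 2) * Complex.log (-w)) = E⁻¹ * I := by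
      rw [hlog, ← Complex.exp_add,
        show (η + w - 1 / 2) * Complex.log w +
            (1 - η + -w - 1 / 2) * (Complex.log w + (Real.pi : ℂ) * I)
          = -((Real.pi : ℂ) * I * z) + (Real.pi : ℂ) * I / 2 by rw [hz]; ring,
        Complex.exp_add, Complex.exp_neg, hI2]
    have hEE : Complex.exp (-(2 * (Real.pi : ℂ) * I * (w + η))) = E⁻¹ * E⁻¹ := by
      rw [← mul_inv, ← Complex.exp_add, ← Complex.exp_neg]; congr 1; rw [hz]; ring
    rw [hmain, hexp, hEE, hsin_formula, div_div,
      show ((E⁻¹ - E) * I / 2) * (2 * (Real.pi : ℂ) * (E⁻¹ * I))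
          = (Real.pi : ℂ) * (E⁻¹ * E⁻¹ - E * E⁻¹) * (I * I) by ring,
      Complex.I_mul_I, mul_inv_cancel₀ hE,
      show ((Real.pi : ℂ) * (E⁻¹ * E⁻¹ - 1)) * (-1) = (Real.pi : ℂ) * (1 - E⁻¹ * E⁻¹) by ring,
      div_eq_mul_inv, mul_inv, ← mul_assoc, mul_inv_cancel₀ hπ, one_mul]
end

section
/- Let z, t ∈ ℂ* with Re(t/z) > 0, and let τ, θ ∈ ℂ be such that z/(2πit) + 1/2 − θ − τ/2 is not an integer. Then Λ(z/(2πit), 1/2 − θ − τ/2) · Λ(−z/(2πit), 1/2 + θ + τ/2) = (1 + exp(πiτ + 2πiθ − z/t))^{-1}. (This is the jump relation across the active ray ℝ_{>0}·z satisfied by the solution of the quantum Riemann-Hilbert problem for the doubled A₁ refined BPS structure.) -/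
/-!
With `s = w + η` and `Im w < 0`, the principal logarithm satisfies `Log(−w) = Log w + πi`, so the
exponential factors of `Λ(w, η) · Λ(−w, 1 − η)` collapse to `i · e^{−πis}`, while the Gamma factors
give `π / sin(πs)` by the reflection formula. Since `2i sin(πs) e^{−πis} = 1 − e^{−2πis}`, the product
is `(1 − e^{−2πis})⁻¹`. For `w = z/(2πit)` with `Re(t/z) > 0` we have `Im w < 0`, and
`−e^{−2πis} = exp(πiτ + 2πiθ − z/t)`.
-/

open Complex
open scoped Real

lemma Complex.log_neg_of_im_neg {w : ℂ} (hw : w.im < 0) : log (-w) = log w + π * I := by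
  apply Complex.ext
  · simp [log_re]
  · simp [log_im, arg_neg_eq_arg_add_pi_of_im_neg hw]

lemma Complex.two_mul_I_mul_sin_mul_exp_neg (x : ℂ) :
    2 * I * sin x * exp (-(x * I)) = 1 - exp (-(2 * x * I)) := by
  have h : exp (x * I) * exp (-(x * I)) = 1 := by rw [← exp_add, add_neg_cancel, exp_zero]
  rw [sin, show -(2 * x * I) = -(x * I) + -(x * I) by ring, exp_add, neg_mul]
  linear_combination (exp (-(x * I)) ^ 2 - exp (-(x * I)) * exp (x * I)) * I_sq + h

lemma Complex.im_div_two_pi_I_mul_neg {z t : ℂ} (h : 0 < (t / z).re) :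
    (z / (2 * π * I * t)).im < 0 := by
  have hre : 0 < (z / t).re := by
    rw [← inv_div, inv_re]
    exact div_pos h (normSq_pos.2 fun h0 => by simp [h0] at h)
  have : z / (2 * π * I * t) = ((-(1 / (2 * π)) : ℝ) : ℂ) * (I * (z / t)) := by
    push_cast
    field_simp
    rw [I_sq]
    ring
  rw [this, im_ofReal_mul, I_mul_im]
  exact mul_neg_of_neg_of_pos (by simp [Real.pi_pos]) hre

-- At integer `s` both sides are `0`, through the junk values `π / 0 = 0` and `0⁻¹ = 0`.
lemma Lambda_mul_Lambda_neg {w : ℂ} (hw : w.im < 0) (η : ℂ) :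
    Lambda w η * Lambda (-w) (1 - η) = (1 - exp (-(2 * π * I * (w + η))))⁻¹ := by
  set s := w + η
  have hΓ : Gamma s * Gamma (1 - s) = π / sin (π * s) := Gamma_mul_Gamma_one_sub s
  have hsqrt : (Real.sqrt (2 * π) : ℂ) * Real.sqrt (2 * π) = 2 * π := by
    rw [← ofReal_mul, Real.mul_self_sqrt (by positivity)]; push_cast; ring
  have hexp : exp ((η + w - 1 / 2) * log w) * exp ((1 - η + -w - 1 / 2) * log (-w))
      = I * exp (-(π * s * I)) := by
    have hexponent : (η + w - 1 / 2) * log w + (1 - η + -w - 1 / 2) * (log w + π * I)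
        = π / 2 * I + -(π * s * I) := by ring
    rw [log_neg_of_im_neg hw, ← exp_add, hexponent, exp_add, exp_pi_div_two_mul_I]
  calc Lambda w η * Lambda (-w) (1 - η)
      = Gamma s * Gamma (1 - s) * (exp w * exp (-w)) /
          ((Real.sqrt (2 * π) : ℂ) * Real.sqrt (2 * π) * (exp ((η + w - 1 / 2) * log w) *
            exp ((1 - η + -w - 1 / 2) * log (-w)))) := by
        simp only [Lambda, show -w + (1 - η) = 1 - s by ring]; ring
    _ = π / sin (π * s) / (2 * π * (I * exp (-(π * s * I)))) := by
        rw [hΓ, ← exp_add, add_neg_cancel, exp_zero, mul_one, hsqrt, hexp]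
    _ = (2 * I * sin (π * s) * exp (-(π * s * I)))⁻¹ := by
        field_simp
    _ = (1 - exp (-(2 * π * I * s)))⁻¹ := by
        rw [two_mul_I_mul_sin_mul_exp_neg]; ring_nf

theorem lambda_jump_relation_general (z t τ θ : ℂ)
    (hre : 0 < (t / z).re) :
    Lambda (z / (2 * Real.pi * Complex.I * t)) (1 / 2 - θ - τ / 2) *
        Lambda (-(z / (2 * Real.pi * Complex.I * t))) (1 / 2 + θ + τ / 2) =
      (1 + Complex.exp (Real.pi * Complex.I * τ + 2 * Real.pi * Complex.I * θ - z / t))⁻¹ := by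
  have ht : t ≠ 0 := by rintro rfl; simp at hre
  have hexp : exp (-(2 * π * I * (z / (2 * π * I * t) + (1 / 2 - θ - τ / 2))))
      = -exp (π * I * τ + 2 * π * I * θ - z / t) := by
    rw [← exp_sub_pi_mul_I]
    congr 1
    field_simp
    ring
  rw [show 1 / 2 + θ + τ / 2 = 1 - (1 / 2 - θ - τ / 2) by ring,
    Lambda_mul_Lambda_neg (im_div_two_pi_I_mul_neg hre), hexp, sub_neg_eq_add]

/-- (Jump relation across the active ray `ℝ_{>0}·z` for the quantum
Riemann–Hilbert problem of the doubled A₁ refined BPS structure.)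
Let `z, t ∈ ℂ*` with `Re(t/z) > 0`, and let `τ, θ ∈ ℂ` be such that
`z/(2πit) + 1/2 − θ − τ/2` is not an integer.  Then
`Λ(z/(2πit), 1/2 − θ − τ/2) · Λ(−z/(2πit), 1/2 + θ + τ/2)
  = (1 + exp(πiτ + 2πiθ − z/t))⁻¹`. -/
theorem lambda_jump_relation (z t τ θ : ℂ) (hz : z ≠ 0) (ht : t ≠ 0)
    (hre : 0 < (t / z).re)
    (hint : ∀ n : ℤ, z / (2 * Real.pi * Complex.I * t) + 1 / 2 - θ - τ / 2 ≠ (n : ℂ)) :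
    Lambda (z / (2 * Real.pi * Complex.I * t)) (1 / 2 - θ - τ / 2) *
        Lambda (-(z / (2 * Real.pi * Complex.I * t))) (1 / 2 + θ + τ / 2) =
      (1 + Complex.exp (Real.pi * Complex.I * τ + 2 * Real.pi * Complex.I * θ - z / t))⁻¹ :=
  lambda_jump_relation_general z t τ θ hre
end

section
/- Fix z ∈ ℂ* and η ∈ ℂ. There exist real constants k > 0 and C > 0 such that for all t ∈ ℂ* with Re(t/z) > 0 and |t| ≥ C, and with z/(2πit) + η not a nonpositive integer, one has |t|^{−k} ≤ |Λ(z/(2πit), η)| ≤ |t|^{k}. (This is the bounded growth condition at t = ∞ satisfied by the solution of the quantum Riemann-Hilbert problem for the doubled A₁ refined BPS structure.) -/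
open Filter Topology Complex

section

variable {E 𝕜 : Type*} [NormedAddCommGroup E] [NormedDivisionRing 𝕜]

def PolyBoundedAtZero (F : E → 𝕜) : Prop :=
  ∃ k : ℝ, 0 ≤ k ∧ ∀ᶠ w in 𝓝[≠] (0 : E), ‖w‖ ^ k ≤ ‖F w‖ ∧ ‖F w‖ ≤ ‖w‖ ^ (-k)

lemma eventually_norm_pos_and_le_nhdsNE {c : ℝ} (hc : 0 < c) :
    ∀ᶠ w in 𝓝[≠] (0 : E), 0 < ‖w‖ ∧ ‖w‖ ≤ c := by
  filter_upwards [self_mem_nhdsWithin, nhdsWithin_le_nhds (Metric.closedBall_mem_nhds 0 hc)]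
    with w hw hwc
  exact ⟨norm_pos_iff.2 hw, by simpa using hwc⟩

namespace PolyBoundedAtZero

variable {F G : E → 𝕜}

lemma congr' (hF : PolyBoundedAtZero F) (h : F =ᶠ[𝓝[≠] 0] G) : PolyBoundedAtZero G := by
  obtain ⟨k, hk, hF⟩ := hF
  exact ⟨k, hk, by filter_upwards [hF, h] with w hw hFG; rwa [← hFG]⟩

lemma of_const_mul_rpow_bounds {c k : ℝ} (hc : 0 < c) (hk : 0 ≤ k)
    (h : ∀ᶠ w in 𝓝[≠] (0 : E), c * ‖w‖ ^ k ≤ ‖F w‖ ∧ ‖F w‖ ≤ c⁻¹ * ‖w‖ ^ (-k)) :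
    PolyBoundedAtZero F := by
  refine ⟨k + 1, by linarith, ?_⟩
  filter_upwards [h, eventually_norm_pos_and_le_nhdsNE hc] with w ⟨hlo, hhi⟩ ⟨hw, hwc⟩
  rw [Real.rpow_add hw, Real.rpow_one, neg_add, Real.rpow_add hw, Real.rpow_neg_one]
  constructor
  · calc ‖w‖ ^ k * ‖w‖ ≤ c * ‖w‖ ^ k := by rw [mul_comm]; gcongr
      _ ≤ ‖F w‖ := hlo
  · calc ‖F w‖ ≤ c⁻¹ * ‖w‖ ^ (-k) := hhi
      _ ≤ ‖w‖ ^ (-k) * ‖w‖⁻¹ := by rw [mul_comm]; gcongr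

lemma of_continuousAt (hF : ContinuousAt F 0) (h0 : F 0 ≠ 0) : PolyBoundedAtZero F := by
  set a := ‖F 0‖
  have ha : 0 < a := norm_pos_iff.2 h0
  have hnear : ∀ᶠ w in 𝓝 (0 : E), ‖F w‖ ∈ Set.Ioo (a / 2) (2 * a) :=
    hF.norm.eventually (Ioo_mem_nhds (by linarith) (by linarith))
  refine of_const_mul_rpow_bounds (c := min (a / 2) (2 * a)⁻¹) (k := 0) (by positivity) le_rfl ?_
  filter_upwards [nhdsWithin_le_nhds hnear] with w ⟨hlo, hhi⟩
  simp only [Real.rpow_zero, neg_zero, mul_one]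
  refine ⟨(min_le_left _ _).trans hlo.le, hhi.le.trans ?_⟩
  rw [le_inv_comm₀ (by positivity) (by positivity)]
  exact min_le_right _ _

lemma mul (hF : PolyBoundedAtZero F) (hG : PolyBoundedAtZero G) :
    PolyBoundedAtZero fun w => F w * G w := by
  obtain ⟨k, hk, hF⟩ := hF
  obtain ⟨l, hl, hG⟩ := hG
  refine ⟨k + l, add_nonneg hk hl, ?_⟩
  filter_upwards [hF, hG, eventually_norm_pos_and_le_nhdsNE one_pos]
    with w ⟨hF₁, hF₂⟩ ⟨hG₁, hG₂⟩ ⟨hw, _⟩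
  rw [norm_mul, neg_add, Real.rpow_add hw, Real.rpow_add hw]
  exact ⟨mul_le_mul hF₁ hG₁ (by positivity) (norm_nonneg _),
    mul_le_mul hF₂ hG₂ (norm_nonneg _) (by positivity)⟩

lemma inv (hF : PolyBoundedAtZero F) : PolyBoundedAtZero fun w => (F w)⁻¹ := by
  obtain ⟨k, hk, hF⟩ := hF
  refine ⟨k, hk, ?_⟩
  filter_upwards [hF, eventually_norm_pos_and_le_nhdsNE one_pos] with w ⟨hlo, hhi⟩ ⟨hw, _⟩
  rw [Real.rpow_neg hw.le] at hhi ⊢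
  have hwk : 0 < ‖w‖ ^ k := by positivity
  rw [norm_inv]
  exact ⟨(le_inv_comm₀ hwk (hwk.trans_le hlo)).2 hhi, inv_anti₀ hwk hlo⟩

lemma div (hF : PolyBoundedAtZero F) (hG : PolyBoundedAtZero G) :
    PolyBoundedAtZero fun w => F w / G w := by
  simpa only [div_eq_mul_inv] using hF.mul hG.inv

lemma pow (n : ℕ) : PolyBoundedAtZero fun w : 𝕜 => w ^ n := by
  refine ⟨n, n.cast_nonneg, ?_⟩
  filter_upwards [eventually_norm_pos_and_le_nhdsNE one_pos] with w ⟨hw, hw1⟩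
  rw [norm_pow, ← Real.rpow_natCast]
  exact ⟨le_rfl, Real.rpow_le_rpow_of_exponent_ge hw hw1 (by linarith [n.cast_nonneg (α := ℝ)])⟩

lemma exists_rpow_bounds_comp_div {K : Type*} [NormedDivisionRing K] {F : K → 𝕜}
    (hF : PolyBoundedAtZero F) {a : K} (ha : a ≠ 0) :
    ∃ k : ℝ, 0 < k ∧ ∃ C : ℝ, 0 < C ∧ ∀ t : K, C ≤ ‖t‖ →
      ‖t‖ ^ (-k) ≤ ‖F (a / t)‖ ∧ ‖F (a / t)‖ ≤ ‖t‖ ^ k := by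
  obtain ⟨k, hk, hF⟩ := hF
  obtain ⟨ε, hε, hP⟩ := Metric.eventually_nhds_iff.1 (eventually_nhdsWithin_iff.1 hF)
  have ha' : 0 < ‖a‖ := norm_pos_iff.2 ha
  have hak : 0 < ‖a‖ ^ k := by positivity
  refine ⟨k + 1, by linarith, max (2 * ‖a‖ / ε) (‖a‖ ^ (-k)),
    lt_max_of_lt_right (by positivity), fun t ht => ?_⟩
  have ht₁ : 2 * ‖a‖ / ε ≤ ‖t‖ := (le_max_left _ _).trans ht
  have ht₂ : ‖a‖ ^ (-k) ≤ ‖t‖ := (le_max_right _ _).trans ht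
  have htpos : 0 < ‖t‖ := (Real.rpow_pos_of_pos ha' _).trans_le ht₂
  have hsmall : dist (a / t) 0 < ε := by
    rw [dist_zero_right, norm_div, div_lt_iff₀ htpos]
    rw [div_le_iff₀ hε] at ht₁
    linarith
  obtain ⟨hlo, hhi⟩ := hP hsmall (div_ne_zero ha (norm_pos_iff.1 htpos))
  rw [norm_div, Real.div_rpow ha'.le htpos.le] at hlo hhi
  rw [Real.rpow_neg ha'.le, Real.rpow_neg htpos.le, div_inv_eq_mul] at hhi
  rw [Real.rpow_neg ha'.le] at ht₂
  rw [Real.rpow_neg htpos.le, Real.rpow_add htpos, Real.rpow_one]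
  constructor
  · calc (‖t‖ ^ k * ‖t‖)⁻¹ = ‖t‖⁻¹ / ‖t‖ ^ k := by rw [mul_comm, mul_inv, div_eq_mul_inv]
      _ ≤ ‖a‖ ^ k / ‖t‖ ^ k := by gcongr; exact (inv_le_comm₀ htpos hak).2 ht₂
      _ ≤ _ := hlo
  · calc _ ≤ (‖a‖ ^ k)⁻¹ * ‖t‖ ^ k := hhi
      _ ≤ ‖t‖ * ‖t‖ ^ k := by gcongr
      _ = ‖t‖ ^ k * ‖t‖ := mul_comm _ _

end PolyBoundedAtZero

end

lemma polyBoundedAtZero_Gamma_add (η : ℂ) : PolyBoundedAtZero fun w => Gamma (w + η) := by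
  have hf_ne : ¬ ∀ᶠ s in 𝓝 η, (Gamma s)⁻¹ = 0 := fun h => by
    simpa using AnalyticOnNhd.eqOn_zero_of_preconnected_of_eventuallyEq_zero
      (fun s _ => differentiable_one_div_Gamma.analyticAt s) isPreconnected_univ
      (Set.mem_univ η) h (Set.mem_univ 1)
  obtain ⟨n, g, hg, hg0, hfg⟩ :=
    (differentiable_one_div_Gamma.analyticAt η).exists_eventuallyEq_pow_smul_nonzero_iff.2 hf_ne
  have hg_cont : ContinuousAt (fun w => g (w + η)) 0 :=
    hg.continuousAt.comp_of_eq (by fun_prop) (zero_add η)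
  refine ((PolyBoundedAtZero.pow n).mul
    (.of_continuousAt hg_cont (by simpa using hg0))).inv.congr' ?_
  have hshift : Tendsto (· + η) (𝓝 0) (𝓝 η) := by
    simpa using (continuous_add_const η).tendsto 0
  filter_upwards [nhdsWithin_le_nhds (hshift.eventually hfg)] with w hw
  rw [← inv_inv (Gamma (w + η)), hw, add_sub_cancel_right, smul_eq_mul]

lemma polyBoundedAtZero_exp_mul_log {h : ℂ → ℂ} (hh : ContinuousAt h 0) :
    PolyBoundedAtZero fun w => exp (h w * log w) := by
  set A := ‖h 0‖ + 1
  have hA : 0 ≤ A := by positivity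
  have hbound : ∀ᶠ w in 𝓝 (0 : ℂ), ‖h w‖ ≤ A :=
    hh.norm.eventually (eventually_le_nhds (lt_add_one _))
  refine .of_const_mul_rpow_bounds (c := Real.exp (-(A * Real.pi))) (k := A) (Real.exp_pos _) hA ?_
  filter_upwards [nhdsWithin_le_nhds hbound, eventually_norm_pos_and_le_nhdsNE one_pos]
    with w hhw ⟨hw, hw1⟩
  have hlog : ‖log w‖ ≤ Real.pi - Real.log ‖w‖ :=
    calc ‖log w‖ ≤ |(log w).re| + |(log w).im| := norm_le_abs_re_add_abs_im _
      _ ≤ -Real.log ‖w‖ + Real.pi := by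
        rw [log_re, log_im, abs_of_nonpos (Real.log_nonpos hw.le hw1)]
        gcongr
        exact abs_arg_le_pi w
      _ = Real.pi - Real.log ‖w‖ := by ring
  have hre : |(h w * log w).re| ≤ A * (Real.pi - Real.log ‖w‖) :=
    calc |(h w * log w).re| ≤ ‖h w * log w‖ := abs_re_le_norm _
      _ = ‖h w‖ * ‖log w‖ := norm_mul _ _
      _ ≤ A * (Real.pi - Real.log ‖w‖) := mul_le_mul hhw hlog (norm_nonneg _) hA
  rw [norm_exp, Real.rpow_def_of_pos hw, Real.rpow_def_of_pos hw]
  simp only [← Real.exp_neg, neg_neg, ← Real.exp_add, Real.exp_le_exp]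
  constructor <;> linarith [abs_le.1 hre]

lemma polyBoundedAtZero_Lambda (η : ℂ) : PolyBoundedAtZero fun w => Lambda w η :=
  ((polyBoundedAtZero_Gamma_add η).mul
      (PolyBoundedAtZero.of_continuousAt continuous_exp.continuousAt (exp_ne_zero 0))).div
    ((PolyBoundedAtZero.of_continuousAt continuousAt_const
        (ofReal_ne_zero.2 (Real.sqrt_ne_zero'.2 (by positivity)))).mul
      (polyBoundedAtZero_exp_mul_log (by fun_prop)))

/-- (Bounded growth at `t = ∞` for the solution of the quantum
Riemann–Hilbert problem of the doubled A₁ refined BPS structure.)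
Fix `z ∈ ℂ*` and `η ∈ ℂ`.  There exist real constants `k > 0` and `C > 0` such that for
all `t ∈ ℂ*` with `Re(t/z) > 0` and `|t| ≥ C`, and with `z/(2πit) + η` not a nonpositive
integer, one has `|t|^{−k} ≤ |Λ(z/(2πit), η)| ≤ |t|^k`. -/
theorem lambda_bounded_growth_at_infinity (z η : ℂ) (hz : z ≠ 0) :
    ∃ k : ℝ, 0 < k ∧ ∃ C : ℝ, 0 < C ∧
      ∀ t : ℂ, t ≠ 0 → 0 < (t / z).re → C ≤ ‖t‖ →
        (∀ n : ℕ, z / (2 * Real.pi * Complex.I * t) + η ≠ -(n : ℂ)) →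
          ‖t‖ ^ (-k) ≤ ‖Lambda (z / (2 * Real.pi * Complex.I * t)) η‖ ∧
            ‖Lambda (z / (2 * Real.pi * Complex.I * t)) η‖ ≤ ‖t‖ ^ k := by
  have ha : z / (2 * Real.pi * I) ≠ 0 := div_ne_zero hz (by simp [Real.pi_ne_zero])
  obtain ⟨k, hk, C, hC, hbounds⟩ :=
    (polyBoundedAtZero_Lambda η).exists_rpow_bounds_comp_div ha
  refine ⟨k, hk, C, hC, fun t _ _ htC _ => ?_⟩
  rw [← div_div]
  exact hbounds t htC
end

section
/- Let N ≥ 1 be an integer, let a = (a₁,…,a_N) ∈ ℂ^N with Re(a_i) > 0 for every i, let x ∈ ℂ with Re(x) > 0, and let s ∈ ℂ with Re(s) > N. Then the family indexed by n = (n₁,…,n_N) ∈ (ℤ_{≥0})^N of terms exp(−s · Log(x + n₁a₁ + ⋯ + n_N a_N)) is absolutely summable; i.e. the Barnes multiple zeta series ζ_N(s, x | a) = ∑_{n ∈ (ℤ_{≥0})^N} (x + n·a)^{−s} converges absolutely for Re(s) > N. -/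
/-!
Since `Re z > 0`, the argument of `z = x + n·a` lies in `[-π/2, π/2]`, so
`|z^{-s}| ≤ e^{π|Im s|/2} (Re z)^{-Re s}`, and `Re z ≥ δ (1 + n₁ + ⋯ + n_N)` for
`δ = min(Re x, Re a₁, …, Re a_N)`. Because `∏ (1 + nᵢ) ≤ (1 + ∑ nᵢ)^N`, choosing `t > 1` with
`N t ≤ Re s` bounds the terms by a constant times `∏ᵢ (1 + nᵢ)^{-t}`, a product of convergent
one-dimensional `p`-series.
-/

open Complex Real Finset

theorem summable_fin_prod_of_nonneg {α : Type*} :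
    ∀ {n : ℕ} {f : Fin n → α → ℝ}, (∀ i a, 0 ≤ f i a) → (∀ i, Summable (f i)) →
      Summable fun v : Fin n → α => ∏ i, f i (v i)
  | 0, _, _, _ => .of_finite
  | n + 1, f, hf0, hf => by
    rw [← (Fin.consEquiv fun _ => α).summable_iff]
    refine ((hf 0).mul_of_nonneg (summable_fin_prod_of_nonneg (fun i => hf0 i.succ)
      fun i => hf i.succ) (hf0 0) fun v => prod_nonneg fun i _ => hf0 _ _).congr fun p => ?_
    simp [Fin.consEquiv, Fin.prod_univ_succ]

theorem Real.summable_one_add_nat_rpow_neg {t : ℝ} (ht : 1 < t) :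
    Summable fun m : ℕ => (1 + (m : ℝ)) ^ (-t) := by
  simpa [add_comm] using
    (summable_nat_add_iff 1).mpr (Real.summable_nat_rpow.mpr (by linarith : -t < -1))

theorem prod_one_add_le_one_add_sum_pow {ι : Type*} [Fintype ι] {u : ι → ℝ} (hu : ∀ i, 0 ≤ u i) :
    ∏ i, (1 + u i) ≤ (1 + ∑ i, u i) ^ Fintype.card ι := by
  rw [← Finset.card_univ, ← prod_const]
  exact prod_le_prod (fun i _ => by linarith [hu i]) fun i _ => by
    linarith [single_le_sum (fun j _ => hu j) (mem_univ i)]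

theorem one_add_sum_rpow_neg_le_prod {ι : Type*} [Fintype ι] {u : ι → ℝ} (hu : ∀ i, 0 ≤ u i)
    {t σ : ℝ} (ht : 0 ≤ t) (hσ : Fintype.card ι * t ≤ σ) :
    (1 + ∑ i, u i) ^ (-σ) ≤ ∏ i, (1 + u i) ^ (-t) := by
  have hS : 1 ≤ 1 + ∑ i, u i := by linarith [sum_nonneg fun i (_ : i ∈ univ) => hu i]
  calc (1 + ∑ i, u i) ^ (-σ) ≤ (1 + ∑ i, u i) ^ (-(Fintype.card ι * t)) :=
        Real.rpow_le_rpow_of_exponent_le hS (by linarith)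
    _ = ((1 + ∑ i, u i) ^ Fintype.card ι) ^ (-t) := by
        rw [← Real.rpow_natCast, ← Real.rpow_mul (by linarith), mul_neg]
    _ ≤ (∏ i, (1 + u i)) ^ (-t) :=
        Real.rpow_le_rpow_of_nonpos (prod_pos fun i _ => by linarith [hu i])
          (prod_one_add_le_one_add_sum_pow hu) (by linarith)
    _ = ∏ i, (1 + u i) ^ (-t) := (Real.finsetProd_rpow _ _ (fun i _ => by linarith [hu i]) _).symm

theorem Complex.norm_exp_neg_mul_log_le {z : ℂ} (hz : 0 < z.re) {s : ℂ} (hs : 0 ≤ s.re) :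
    ‖exp (-s * log z)‖ ≤ Real.exp (|s.im| * (π / 2)) * z.re ^ (-s.re) := by
  have hz0 : z ≠ 0 := fun h => by simp [h] at hz
  have harg : |arg z| ≤ π / 2 := abs_arg_le_pi_div_two_iff.mpr hz.le
  rw [mul_comm, ← cpow_def_of_ne_zero hz0, norm_cpow_of_ne_zero hz0, div_eq_mul_inv,
    ← Real.exp_neg, mul_comm]
  gcongr
  · rw [neg_im, mul_neg, neg_neg, mul_comm]
    calc s.im * arg z ≤ |s.im| * |arg z| := by rw [← abs_mul]; exact le_abs_self _
      _ ≤ |s.im| * (π / 2) := by gcongr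
  · rw [neg_re]
    exact Real.rpow_le_rpow_of_nonpos hz (re_le_norm z) (by linarith)

theorem exists_one_lt_and_natCast_mul_le {N : ℕ} {σ : ℝ} (h : N < σ) :
    ∃ t, 1 < t ∧ N * t ≤ σ := by
  rcases Nat.eq_zero_or_pos N with rfl | hN
  · exact ⟨2, one_lt_two, by simpa using h.le⟩
  · exact ⟨σ / N, (one_lt_div (by positivity)).mpr h, (mul_div_cancel₀ _ (by positivity)).le⟩

theorem exists_pos_le_of_finite {ι : Type*} [Finite ι] {f : ι → ℝ} (hf : ∀ i, 0 < f i) :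
    ∃ δ > 0, ∀ i, δ ≤ f i := by
  cases isEmpty_or_nonempty ι
  · exact ⟨1, one_pos, isEmptyElim⟩
  · obtain ⟨j, hj⟩ := Finite.exists_min f
    exact ⟨f j, hf j, hj⟩

theorem le_re_add_sum_natCast_mul {ι : Type*} [Fintype ι] {x : ℂ} {a : ι → ℂ} {δ : ℝ}
    (hx : δ ≤ x.re) (ha : ∀ i, δ ≤ (a i).re) (n : ι → ℕ) :
    δ * (1 + ∑ i, (n i : ℝ)) ≤ (x + ∑ i, (n i : ℂ) * a i).re := by
  simp only [add_re, re_sum, ← ofReal_natCast, re_ofReal_mul, mul_add, mul_one, mul_sum]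
  refine add_le_add hx (sum_le_sum fun i _ => ?_)
  rw [mul_comm]
  exact mul_le_mul_of_nonneg_left (ha i) (Nat.cast_nonneg _)

theorem barnes_zeta_summable_general (N : ℕ) (a : Fin N → ℂ)
    (ha : ∀ i, 0 < (a i).re) (x : ℂ) (hx : 0 < x.re) (s : ℂ) (hs : (N : ℝ) < s.re) :
    Summable fun n : Fin N → ℕ =>
      ‖Complex.exp (-s * Complex.log (x + ∑ i, (n i : ℂ) * a i))‖ := by
  obtain ⟨δ, hδ, hδ_le⟩ := exists_pos_le_of_finite
    (f := fun o : Option (Fin N) => o.elim x.re fun i => (a i).re)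
    (by rintro (_ | i) <;> simp [hx, ha])
  obtain ⟨t, ht, hNt⟩ := exists_one_lt_and_natCast_mul_le hs
  have hσ : 0 ≤ s.re := by linarith [N.cast_nonneg (α := ℝ)]
  set C := Real.exp (|s.im| * (π / 2)) * δ ^ (-s.re)
  refine ((summable_fin_prod_of_nonneg (fun _ m => by positivity)
    fun _ => Real.summable_one_add_nat_rpow_neg ht).mul_left C).of_nonneg_of_le
    (fun _ => norm_nonneg _) fun n => ?_
  have hre := le_re_add_sum_natCast_mul (hδ_le none) (fun i => hδ_le (some i)) n
  calc _ ≤ Real.exp (|s.im| * (π / 2)) * (x + ∑ i, (n i : ℂ) * a i).re ^ (-s.re) :=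
        norm_exp_neg_mul_log_le ((by positivity : 0 < δ * (1 + ∑ i, (n i : ℝ))).trans_le hre) hσ
    _ ≤ Real.exp (|s.im| * (π / 2)) * (δ * (1 + ∑ i, (n i : ℝ))) ^ (-s.re) := by
        exact mul_le_mul_of_nonneg_left
          (Real.rpow_le_rpow_of_nonpos (by positivity) hre (by linarith)) (Real.exp_nonneg _)
    _ = C * (1 + ∑ i, (n i : ℝ)) ^ (-s.re) := by rw [Real.mul_rpow hδ.le (by positivity)]; ring
    _ ≤ C * ∏ i, (1 + (n i : ℝ)) ^ (-t) := by
        gcongr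
        exact one_add_sum_rpow_neg_le_prod (fun i => Nat.cast_nonneg _) (by linarith)
          (by simpa using hNt)

/-- Let `N ≥ 1`, let `a = (a₁,…,a_N) ∈ ℂᴺ` with `Re(aᵢ) > 0` for every
`i`, let `x ∈ ℂ` with `Re(x) > 0`, and let `s ∈ ℂ` with `Re(s) > N`.  Then the family of
terms `exp(−s · Log(x + n·a))`, indexed by `n ∈ (ℤ_{≥0})ᴺ`, is absolutely summable; i.e.
the Barnes multiple zeta series `ζ_N(s, x | a) = ∑_{n} (x + n·a)^{−s}` converges
absolutely for `Re(s) > N`. -/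
theorem barnes_zeta_summable (N : ℕ) (hN : 1 ≤ N) (a : Fin N → ℂ)
    (ha : ∀ i, 0 < (a i).re) (x : ℂ) (hx : 0 < x.re) (s : ℂ) (hs : (N : ℝ) < s.re) :
    Summable fun n : Fin N → ℕ =>
      ‖Complex.exp (-s * Complex.log (x + ∑ i, (n i : ℂ) * a i))‖ :=
  barnes_zeta_summable_general N a ha x hx s hs
end

section
/- Let N ≥ 1 be an integer, let a = (a₁,…,a_N) ∈ ℂ^N with Re(a_i) > 0 for every i, and let x ∈ ℂ be such that x ≠ −n·a for every n ∈ (ℤ_{≥0})^N ∖ {0}. Then the family indexed by n ∈ (ℤ_{≥0})^N ∖ {0} of terms log(1 + x/(n·a)) + ∑_{j=1}^{N} (−1)^j x^j / (j · (n·a)^j) is absolutely summable (with log the principal branch); consequently the Weierstrass product W(x, a) = ∏_{n ∈ (ℤ_{≥0})^N ∖ {0}} (1 + x/(n·a)) · exp(∑_{j=1}^{N} (−1)^j x^j/(j·(n·a)^j)) converges absolutely. -/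
/-!
Write `w = x / n·a`. The summand is `log (1 + w) - logTaylor (N + 1) w = O(w ^ (N + 1))`, and
`‖n·a‖ ≥ c · |n|` for some `c > 0` because `Re aᵢ > 0`, so the summands are
`O((|n| + 1) ^ (-(N + 1)))`. This majorant is summable over `ℕᴺ` since
`(|n| + 1) ^ (-N q) ≤ ∏ (nᵢ + 1) ^ (-q)` with `q = (N + 1) / N > 1`, and a product of summable
one-variable series is summable on the product. Exponentiating the absolutely summable logarithms
gives the product, whose factors `1 + w` do not vanish.
-/

open Complex Filter Finset Asymptotics Topology

section

variable {ι : Type*} [Fintype ι]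

theorem summable_prod_apply_of_nonneg {β : Type*} {f : ι → β → ℝ} (hf₀ : ∀ i, 0 ≤ f i)
    (hf : ∀ i, Summable (f i)) : Summable fun n : ι → β => ∏ i, f i (n i) := by
  classical
  refine summable_of_sum_le (c := ∏ i, ∑' k, f i k) (fun n => prod_nonneg fun i _ => hf₀ i _)
    fun F => ?_
  set T : Finset β := F.biUnion fun n => univ.image n
  calc ∑ n ∈ F, ∏ i, f i (n i) ≤ ∑ n ∈ Fintype.piFinset fun _ => T, ∏ i, f i (n i) :=
        sum_le_sum_of_subset_of_nonneg
          (fun n hn => Fintype.mem_piFinset.mpr fun i =>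
            mem_biUnion.mpr ⟨n, hn, mem_image_of_mem n (mem_univ i)⟩)
          fun n _ _ => prod_nonneg fun i _ => hf₀ i _
    _ = ∏ i, ∑ k ∈ T, f i k := (prod_univ_sum _ _).symm
    _ ≤ ∏ i, ∑' k, f i k :=
        prod_le_prod (fun i _ => sum_nonneg fun k _ => hf₀ i k)
          fun i _ => (hf i).sum_le_tsum T fun k _ => hf₀ i k

theorem sum_add_one_rpow_neg_le_prod {q : ℝ} (hq : 0 ≤ q) (n : ι → ℕ) :
    (∑ i, (n i : ℝ) + 1) ^ (-(Fintype.card ι * q)) ≤ ∏ i, ((n i : ℝ) + 1) ^ (-q) := by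
  have hle : ∀ i, (∑ i, (n i : ℝ) + 1) ^ (-q) ≤ ((n i : ℝ) + 1) ^ (-q) := fun i =>
    Real.rpow_le_rpow_of_nonpos (by positivity)
      (by gcongr; exact single_le_sum (fun j _ => Nat.cast_nonneg (n j)) (mem_univ i))
      (neg_nonpos.mpr hq)
  calc (∑ i, (n i : ℝ) + 1) ^ (-(Fintype.card ι * q))
      = ∏ _i : ι, (∑ i, (n i : ℝ) + 1) ^ (-q) := by
        rw [prod_const, card_univ, ← Real.rpow_mul_natCast (by positivity)]
        ring_nf
    _ ≤ ∏ i, ((n i : ℝ) + 1) ^ (-q) :=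
        prod_le_prod (fun _ _ => by positivity) fun i _ => hle i

theorem summable_sum_add_one_rpow_neg {p : ℝ} (hp : Fintype.card ι < p) :
    Summable fun n : ι → ℕ => (∑ i, (n i : ℝ) + 1) ^ (-p) := by
  obtain hι | hι := (Fintype.card ι).eq_zero_or_pos
  · have : IsEmpty ι := Fintype.card_eq_zero_iff.mp hι
    exact .of_finite
  set q := p / Fintype.card ι
  have hq : 1 < q := (one_lt_div (by positivity)).mpr hp
  have hg : Summable fun k : ℕ => ((k : ℝ) + 1) ^ (-q) := by
    simpa [Real.rpow_neg, abs_of_nonneg, add_nonneg] using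
      (Real.summable_one_div_nat_add_rpow 1 q).mpr hq
  refine (summable_prod_apply_of_nonneg (fun _ k => by positivity) fun _ => hg).of_nonneg_of_le
    (fun n => by positivity) fun n => ?_
  convert sum_add_one_rpow_neg_le_prod (by positivity : 0 ≤ q) n using 3
  exact (mul_div_cancel₀ p (by positivity)).symm

theorem tendsto_sum_cofinite_atTop :
    Tendsto (fun n : ι → ℕ => ∑ i, (n i : ℝ)) cofinite atTop := by
  rw [← coprodᵢ_cofinite, Filter.coprodᵢ, tendsto_iSup]
  intro i
  refine tendsto_atTop_mono (fun n => single_le_sum (fun j _ => Nat.cast_nonneg (n j))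
    (mem_univ i)) ?_
  exact tendsto_natCast_atTop_atTop.comp (Nat.cofinite_eq_atTop ▸ tendsto_comap)

variable {a : ι → ℂ}

theorem mul_sum_le_norm_sum_mul {c : ℝ} (hc : ∀ i, c ≤ (a i).re) (n : ι → ℕ) :
    c * ∑ i, (n i : ℝ) ≤ ‖∑ i, (n i : ℂ) * a i‖ :=
  calc c * ∑ i, (n i : ℝ) ≤ ∑ i, (n i : ℝ) * (a i).re := by
        rw [mul_sum]
        refine sum_le_sum fun i _ => ?_
        rw [mul_comm]
        exact mul_le_mul_of_nonneg_left (hc i) (Nat.cast_nonneg _)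
    _ = (∑ i, (n i : ℂ) * a i).re := by simp [Complex.re_sum]
    _ ≤ ‖∑ i, (n i : ℂ) * a i‖ := re_le_norm _

theorem isBigO_div_sum_mul (ha : ∀ i, 0 < (a i).re) (x : ℂ) :
    (fun n : ι → ℕ => x / ∑ i, (n i : ℂ) * a i) =O[cofinite]
      fun n => (∑ i, (n i : ℝ) + 1)⁻¹ := by
  obtain ⟨c, hc₀, hc⟩ := Pi.exists_forall_pos_add_lt (x := 0) fun i => ha i
  refine IsBigO.of_bound (2 * ‖x‖ / c) ?_
  filter_upwards [tendsto_sum_cofinite_atTop.eventually_ge_atTop 1] with n hn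
  have hcS : c * ∑ i, (n i : ℝ) ≤ ‖∑ i, (n i : ℂ) * a i‖ :=
    mul_sum_le_norm_sum_mul (fun i => by simpa using (hc i).le) n
  rw [norm_div, norm_inv, Real.norm_of_nonneg (by positivity)]
  calc ‖x‖ / ‖∑ i, (n i : ℂ) * a i‖ ≤ ‖x‖ / (c * ∑ i, (n i : ℝ)) :=
        div_le_div_of_nonneg_left (norm_nonneg x) (by positivity) hcS
    _ ≤ ‖x‖ / (c * ((∑ i, (n i : ℝ) + 1) / 2)) :=
        div_le_div_of_nonneg_left (norm_nonneg x) (by positivity) (by gcongr; linarith)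
    _ = 2 * ‖x‖ / c * (∑ i, (n i : ℝ) + 1)⁻¹ := by field_simp

theorem summable_norm_log_one_add_div_sub_logTaylor (ha : ∀ i, 0 < (a i).re) (x : ℂ) {m : ℕ}
    (hm : Fintype.card ι ≤ m) :
    Summable fun n : ι → ℕ =>
      ‖log (1 + x / ∑ i, (n i : ℂ) * a i) - logTaylor (m + 1) (x / ∑ i, (n i : ℂ) * a i)‖ := by
  have hw := isBigO_div_sum_mul ha x
  have hw₀ : Tendsto (fun n : ι → ℕ => x / ∑ i, (n i : ℂ) * a i) cofinite (𝓝 0) :=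
    hw.trans_tendsto <| tendsto_inv_atTop_zero.comp <|
      tendsto_atTop_add_const_right _ 1 tendsto_sum_cofinite_atTop
  have hmajorant : Summable fun n : ι → ℕ => ((∑ i, (n i : ℝ) + 1)⁻¹) ^ (m + 1) := by
    refine (summable_sum_add_one_rpow_neg (p := m + 1)
      (by exact_mod_cast Nat.lt_succ_of_le hm)).congr fun n => ?_
    rw [Real.rpow_neg (by positivity), inv_pow, ← Real.rpow_natCast]
    push_cast
    rfl
  exact summable_of_isBigO hmajorant
    (((log_sub_logTaylor_isBigO m).comp_tendsto hw₀).norm_left.trans (hw.pow (m + 1)))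

end

theorem sum_Icc_neg_one_pow_mul_div_eq_neg_logTaylor (x z : ℂ) (m : ℕ) :
    ∑ j ∈ Icc 1 m, (-1 : ℂ) ^ j * x ^ j / ((j : ℂ) * z ^ j) = -logTaylor (m + 1) (x / z) := by
  rw [logTaylor, sum_range_succ', ← Ico_add_one_right_eq_Icc, sum_Ico_eq_sum_range,
    add_tsub_cancel_right, Nat.cast_zero, div_zero, add_zero, ← sum_neg_distrib]
  refine sum_congr rfl fun j _ => ?_
  rw [add_comm 1 j, div_pow]
  ring

theorem one_add_div_ne_zero {K : Type*} [Field K] {x z : K} (h : x ≠ -z) : 1 + x / z ≠ 0 := by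
  rcases eq_or_ne z 0 with rfl | hz
  · simp
  rw [one_add_div hz]
  exact div_ne_zero (fun h' => h (by linear_combination h')) hz

theorem weierstrass_product_converges_general (N : ℕ) (a : Fin N → ℂ)
    (ha : ∀ i, 0 < (a i).re) (x : ℂ)
    (hx : ∀ n : Fin N → ℕ, n ≠ 0 → x ≠ -∑ i, (n i : ℂ) * a i) :
    (Summable fun n : {n : Fin N → ℕ // n ≠ 0} =>
        ‖Complex.log (1 + x / ∑ i, ((n : Fin N → ℕ) i : ℂ) * a i) +
          ∑ j ∈ Finset.Icc 1 N,
            (-1 : ℂ) ^ j * x ^ j / ((j : ℂ) * (∑ i, ((n : Fin N → ℕ) i : ℂ) * a i) ^ j)‖) ∧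
    Multipliable fun n : {n : Fin N → ℕ // n ≠ 0} =>
      (1 + x / ∑ i, ((n : Fin N → ℕ) i : ℂ) * a i) *
        Complex.exp (∑ j ∈ Finset.Icc 1 N,
          (-1 : ℂ) ^ j * x ^ j / ((j : ℂ) * (∑ i, ((n : Fin N → ℕ) i : ℂ) * a i) ^ j)) := by
  have hsum := (summable_norm_log_one_add_div_sub_logTaylor ha x (Fintype.card_fin N).le).subtype
    {n | n ≠ 0}
  simp only [sub_eq_add_neg, ← sum_Icc_neg_one_pow_mul_div_eq_neg_logTaylor] at hsum
  refine ⟨hsum, hsum.of_norm.hasSum.cexp.multipliable.congr fun n => ?_⟩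
  rw [Function.comp_apply, exp_add, exp_log (one_add_div_ne_zero (hx n.1 n.2))]

/-- (Convergence of the canonical Weierstrass product.)
Let `N ≥ 1`, let `a = (a₁,…,a_N) ∈ ℂᴺ` with `Re(aᵢ) > 0`, and let `x ∈ ℂ` with
`x ≠ −n·a` for every `n ∈ (ℤ_{≥0})ᴺ ∖ {0}`.  Then the family of terms
`log(1 + x/(n·a)) + ∑_{j=1}^{N} (−1)ʲ xʲ/(j·(n·a)ʲ)`, indexed by
`n ∈ (ℤ_{≥0})ᴺ ∖ {0}`, is absolutely summable (with `log` the principal branch);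
consequently the Weierstrass product
`W(x,a) = ∏_{n ≠ 0} (1 + x/(n·a)) · exp(∑_{j=1}^{N} (−1)ʲ xʲ/(j·(n·a)ʲ))`
converges absolutely (i.e. the family is multipliable). -/
theorem weierstrass_product_converges (N : ℕ) (hN : 1 ≤ N) (a : Fin N → ℂ)
    (ha : ∀ i, 0 < (a i).re) (x : ℂ)
    (hx : ∀ n : Fin N → ℕ, n ≠ 0 → x ≠ -∑ i, (n i : ℂ) * a i) :
    (Summable fun n : {n : Fin N → ℕ // n ≠ 0} =>
        ‖Complex.log (1 + x / ∑ i, ((n : Fin N → ℕ) i : ℂ) * a i) +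
          ∑ j ∈ Finset.Icc 1 N,
            (-1 : ℂ) ^ j * x ^ j / ((j : ℂ) * (∑ i, ((n : Fin N → ℕ) i : ℂ) * a i) ^ j)‖) ∧
    Multipliable fun n : {n : Fin N → ℕ // n ≠ 0} =>
      (1 + x / ∑ i, ((n : Fin N → ℕ) i : ℂ) * a i) *
        Complex.exp (∑ j ∈ Finset.Icc 1 N,
          (-1 : ℂ) ^ j * x ^ j / ((j : ℂ) * (∑ i, ((n : Fin N → ℕ) i : ℂ) * a i) ^ j)) :=
  weierstrass_product_converges_general N a ha x hx
end

section
/- Let N ≥ 1 be an integer, let a = (a₁,…,a_N) ∈ ℂ^N with Re(a_i) > 0 for every i, let δ ∈ ℂ with Re(δ) > 0, and let x ∈ ℂ with |x| < Re(δ). Then the doubly-indexed family of terms (−1)^{k−1} x^k / (k · (δ + n·a)^k), indexed by n ∈ (ℤ_{≥0})^N and integers k ≥ N+1, is absolutely summable, and ∑_{n ∈ (ℤ_{≥0})^N} ∑_{k≥N+1} (−1)^{k−1} x^k / (k·(δ + n·a)^k) = ∑_{k≥N+1} (−1)^{k−1} (x^k/k) · ζ_N(k, δ | a). -/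
/-!
Put `z_n = δ + n·a`. Since `Re z_n = Re δ + Σ nᵢ Re aᵢ ≥ Re δ > ‖x‖`, the `(n, k)` term is bounded
by `(‖x‖ / ‖z_n‖)^(N+1) · r^(k-N-1)` with `r = ‖x‖ / Re δ < 1`. Summing the geometric factor leaves
`Σ_n ‖z_n‖^(-(N+1))`, which is dominated by a product of one-dimensional series
`∏ᵢ Σ_m (Re δ + m Re aᵢ)^(-(N+1)/N)` because `Re z_n ≥ Re δ + nᵢ Re aᵢ` for every `i`.
Absolute summability then lets the two sums be interchanged.
-/

open Finset

theorem summable_pi_prod_of_nonneg {ι κ : Type*} [Fintype ι] {g : ι → κ → ℝ}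
    (hg₀ : ∀ i m, 0 ≤ g i m) (hg : ∀ i, Summable (g i)) :
    Summable fun n : ι → κ => ∏ i, g i (n i) := by
  classical
  refine summable_of_sum_le (c := ∏ i, ∑' m, g i m) (fun n => prod_nonneg fun i _ => hg₀ _ _)
    fun s => ?_
  calc ∑ n ∈ s, ∏ i, g i (n i)
      ≤ ∑ n ∈ Fintype.piFinset fun i => s.image (· i), ∏ i, g i (n i) :=
        sum_le_sum_of_subset_of_nonneg (fun n hn => Fintype.mem_piFinset.2 fun i =>
          mem_image_of_mem _ hn) fun n _ _ => prod_nonneg fun i _ => hg₀ _ _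
    _ = ∏ i, ∑ m ∈ s.image (· i), g i m := (prod_univ_sum _ _).symm
    _ ≤ ∏ i, ∑' m, g i m :=
        prod_le_prod (fun i _ => sum_nonneg fun m _ => hg₀ _ _)
          fun i _ => (hg i).sum_le_tsum _ fun m _ => hg₀ _ _

theorem summable_inv_add_mul_rpow {c b p : ℝ} (hc : 0 ≤ c) (hb : 0 < b) (hp : 1 < p) :
    Summable fun m : ℕ => ((c + m * b) ^ p)⁻¹ := by
  refine (((Real.summable_one_div_nat_add_rpow (c / b) p).2 hp).mul_left (b ^ p)⁻¹).congr
    fun m => ?_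
  have hcb : c + m * b = (m + c / b) * b := by field_simp; ring
  rw [hcb, Real.mul_rpow (by positivity) hb.le, abs_of_nonneg (by positivity)]
  field_simp

theorem summable_inv_add_sum_mul_rpow {ι : Type*} [Fintype ι] {s c : ℝ}
    (hs : Fintype.card ι < s) (hc : 0 < c) {b : ι → ℝ} (hb : ∀ i, 0 < b i) :
    Summable fun n : ι → ℕ => ((c + ∑ i, n i * b i) ^ s)⁻¹ := by
  rcases isEmpty_or_nonempty ι with _ | _
  · exact .of_finite
  have hcard : (0 : ℝ) < Fintype.card ι := by exact_mod_cast Fintype.card_pos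
  set p := s / Fintype.card ι
  have hp : 1 < p := (one_lt_div hcard).2 hs
  have hterm : ∀ (n : ι → ℕ) i, 0 ≤ n i * b i := fun n i => by have := hb i; positivity
  have hpos : ∀ (n : ι → ℕ) i, 0 < c + n i * b i := fun n i => by linarith [hterm n i]
  have hsum_pos : ∀ n : ι → ℕ, 0 < c + ∑ i, n i * b i := fun n =>
    add_pos_of_pos_of_nonneg hc (sum_nonneg fun i _ => hterm n i)
  refine (summable_pi_prod_of_nonneg
    (fun i m => inv_nonneg.2 (Real.rpow_nonneg (hpos (fun _ => m) i).le p))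
    fun i => summable_inv_add_mul_rpow hc.le (hb i) hp).of_nonneg_of_le
    (fun n => inv_nonneg.2 (Real.rpow_nonneg (hsum_pos n).le s)) fun n => ?_
  have hle : ∀ i, c + n i * b i ≤ c + ∑ j, n j * b j := fun i => by
    gcongr
    exact single_le_sum (f := fun j => (n j : ℝ) * b j) (fun j _ => hterm n j) (mem_univ i)
  calc ((c + ∑ i, n i * b i) ^ s)⁻¹
      = (∏ _i : ι, (c + ∑ i, n i * b i) ^ p)⁻¹ := by
        rw [prod_const, card_univ, ← Real.rpow_mul_natCast (hsum_pos n).le,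
          div_mul_cancel₀ _ hcard.ne']
    _ ≤ (∏ i, (c + n i * b i) ^ p)⁻¹ := by
        refine inv_anti₀ (prod_pos fun i _ => Real.rpow_pos_of_pos (hpos n i) p)
          (prod_le_prod (fun i _ => Real.rpow_nonneg (hpos n i).le p)
            fun i _ => Real.rpow_le_rpow (hpos n i).le (hle i) (by linarith))
    _ = ∏ i, ((c + n i * b i) ^ p)⁻¹ := (prod_inv_distrib _).symm

theorem re_add_sum_natCast_mul_le_norm {ι : Type*} [Fintype ι] (δ : ℂ) (a : ι → ℂ)
    (n : ι → ℕ) : δ.re + ∑ i, n i * (a i).re ≤ ‖δ + ∑ i, (n i : ℂ) * a i‖ := by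
  simpa [Complex.re_sum] using Complex.re_le_norm (δ + ∑ i, (n i : ℂ) * a i)

theorem summable_inv_norm_add_sum_natCast_mul_pow {ι : Type*} [Fintype ι] {k : ℕ}
    (hk : Fintype.card ι < k) {δ : ℂ} (hδ : 0 < δ.re) {a : ι → ℂ} (ha : ∀ i, 0 < (a i).re) :
    Summable fun n : ι → ℕ => (‖δ + ∑ i, (n i : ℂ) * a i‖ ^ k)⁻¹ := by
  refine (summable_inv_add_sum_mul_rpow (s := k) (by exact_mod_cast hk) hδ ha).of_nonneg_of_le
    (fun n => by positivity) fun n => ?_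
  have hpos : 0 < δ.re + ∑ i, n i * (a i).re :=
    add_pos_of_pos_of_nonneg hδ (sum_nonneg fun i _ => mul_nonneg (Nat.cast_nonneg _) (ha i).le)
  rw [Real.rpow_natCast]
  gcongr
  exact re_add_sum_natCast_mul_le_norm δ a n

theorem norm_div_natCast_mul_le (y z : ℂ) (k : ℕ) : ‖y / (k * z)‖ ≤ ‖y / z‖ := by
  rw [div_mul_eq_div_div_swap, norm_div, Complex.norm_natCast]
  rcases k.eq_zero_or_pos with rfl | hk
  · simp [div_nonneg]
  · exact div_le_self (norm_nonneg _) (by exact_mod_cast hk)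

/-- The terms `(-1)^(k-1) x^k / (k w^k)`, `k ≥ m`, are those of the tail of `log (1 + x / w)`. -/
theorem summable_norm_log_tail_terms {α : Type*} {w : α → ℂ} {x : ℂ} {ρ : ℝ} (m : ℕ)
    (hx : ‖x‖ < ρ) (hw : ∀ n, ρ ≤ ‖w n‖) (hsum : Summable fun n => (‖w n‖ ^ m)⁻¹) :
    Summable fun p : α × ℕ =>
      ‖(-1 : ℂ) ^ (m + p.2 - 1) * x ^ (m + p.2) / ((m + p.2 : ℕ) * w p.1 ^ (m + p.2))‖ := by
  have hρ : 0 < ρ := (norm_nonneg x).trans_lt hx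
  have hr : ‖x‖ / ρ < 1 := (div_lt_one hρ).2 hx
  refine ((hsum.mul_left (‖x‖ ^ m)).mul_of_nonneg
    (summable_geometric_of_lt_one (by positivity) hr) (fun n => by positivity)
    fun j => by positivity).of_nonneg_of_le (fun p => norm_nonneg _) fun ⟨n, j⟩ => ?_
  have hwn : 0 < ‖w n‖ := hρ.trans_le (hw n)
  calc ‖(-1 : ℂ) ^ (m + j - 1) * x ^ (m + j) / ((m + j : ℕ) * w n ^ (m + j))‖
      ≤ ‖x ^ (m + j) / w n ^ (m + j)‖ := by
        rw [mul_div_assoc, norm_mul, norm_pow, norm_neg, norm_one, one_pow, one_mul]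
        exact norm_div_natCast_mul_le _ _ _
    _ = (‖x‖ / ‖w n‖) ^ m * (‖x‖ / ‖w n‖) ^ j := by
        rw [norm_div, norm_pow, norm_pow, ← div_pow, pow_add]
    _ ≤ (‖x‖ / ‖w n‖) ^ m * (‖x‖ / ρ) ^ j := by
        gcongr
        exact hw n
    _ = ‖x‖ ^ m * (‖w n‖ ^ m)⁻¹ * (‖x‖ / ρ) ^ j := by
        rw [div_pow, div_eq_mul_inv]

theorem tail_series_rearrangement_general (N : ℕ) (a : Fin N → ℂ)
    (ha : ∀ i, 0 < (a i).re) (δ : ℂ) (hδ : 0 < δ.re) (x : ℂ) (hx : ‖x‖ < δ.re) :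
    (Summable fun p : (Fin N → ℕ) × ℕ =>
        ‖(-1 : ℂ) ^ (N + 1 + p.2 - 1) * x ^ (N + 1 + p.2) /
          ((N + 1 + p.2 : ℕ) * (δ + ∑ i, (p.1 i : ℂ) * a i) ^ (N + 1 + p.2))‖) ∧
    (∑' n : Fin N → ℕ, ∑' j : ℕ,
        (-1 : ℂ) ^ (N + 1 + j - 1) * x ^ (N + 1 + j) /
          ((N + 1 + j : ℕ) * (δ + ∑ i, (n i : ℂ) * a i) ^ (N + 1 + j))) =
      ∑' j : ℕ,
        (-1 : ℂ) ^ (N + 1 + j - 1) * (x ^ (N + 1 + j) / (N + 1 + j : ℕ)) *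
          ∑' n : Fin N → ℕ, ((δ + ∑ i, (n i : ℂ) * a i) ^ (N + 1 + j))⁻¹ := by
  have hw : ∀ n : Fin N → ℕ, δ.re ≤ ‖δ + ∑ i, (n i : ℂ) * a i‖ := fun n =>
    (le_add_of_nonneg_right (sum_nonneg fun i _ => mul_nonneg (Nat.cast_nonneg _) (ha i).le)).trans
      (re_add_sum_natCast_mul_le_norm δ a n)
  have hs := summable_norm_log_tail_terms (N + 1) hx hw
    (summable_inv_norm_add_sum_natCast_mul_pow (by simp) hδ ha)
  refine ⟨hs, ?_⟩
  rw [← Summable.tsum_comm (f := fun (n : Fin N → ℕ) (j : ℕ) => (-1 : ℂ) ^ (N + 1 + j - 1) *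
    x ^ (N + 1 + j) / ((N + 1 + j : ℕ) * (δ + ∑ i, (n i : ℂ) * a i) ^ (N + 1 + j))) hs.of_norm]
  refine tsum_congr fun j => ?_
  rw [← tsum_mul_left]
  exact tsum_congr fun n => by
    rw [mul_div_assoc, div_mul_eq_div_div, div_eq_mul_inv _ (_ ^ _), mul_assoc]

/-- Let `N ≥ 1`, `a = (a₁,…,a_N)` with `Re(aᵢ) > 0`, `Re(δ) > 0`, and
`x ∈ ℂ` with `|x| < Re(δ)`.  Then the doubly-indexed family of terms
`(−1)^{k−1} xᵏ/(k·(δ + n·a)ᵏ)`, indexed by `n ∈ (ℤ_{≥0})ᴺ` and integers `k ≥ N+1`,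
is absolutely summable, and
`∑_n ∑_{k≥N+1} (−1)^{k−1} xᵏ/(k·(δ + n·a)ᵏ) = ∑_{k≥N+1} (−1)^{k−1} (xᵏ/k)·ζ_N(k, δ|a)`,
where `ζ_N(k, δ | a) = ∑_n (δ + n·a)^{−k}`.  (Here `k = N + 1 + j` with `j : ℕ`.) -/
theorem tail_series_rearrangement (N : ℕ) (hN : 1 ≤ N) (a : Fin N → ℂ)
    (ha : ∀ i, 0 < (a i).re) (δ : ℂ) (hδ : 0 < δ.re) (x : ℂ) (hx : ‖x‖ < δ.re) :
    (Summable fun p : (Fin N → ℕ) × ℕ =>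
        ‖(-1 : ℂ) ^ (N + 1 + p.2 - 1) * x ^ (N + 1 + p.2) /
          ((N + 1 + p.2 : ℕ) * (δ + ∑ i, (p.1 i : ℂ) * a i) ^ (N + 1 + p.2))‖) ∧
    (∑' n : Fin N → ℕ, ∑' j : ℕ,
        (-1 : ℂ) ^ (N + 1 + j - 1) * x ^ (N + 1 + j) /
          ((N + 1 + j : ℕ) * (δ + ∑ i, (n i : ℂ) * a i) ^ (N + 1 + j))) =
      ∑' j : ℕ,
        (-1 : ℂ) ^ (N + 1 + j - 1) * (x ^ (N + 1 + j) / (N + 1 + j : ℕ)) *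
          ∑' n : Fin N → ℕ, ((δ + ∑ i, (n i : ℂ) * a i) ^ (N + 1 + j))⁻¹ :=
  tail_series_rearrangement_general N a ha δ hδ x hx
end
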